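/- Let M be a positive semidefinite complex d×d matrix, ε ≥ 0, and η ≥ 0. Then for all density matrices ρ and σ with D(ρ,σ) ≤ η, one has tr(M·(ρ − e^ε·σ)) ≤ η·λ_max(M) − (e^ε + η − 1)·λ_min(M). -/

import Mathlib

open Matrix BigOperators
open scoped ComplexOrder

namespace QDP

variable {n : Type*} [Fintype n] [DecidableEq n]

/-- The square root of a positive semidefinite matrix, as `Matrix.PosSemidef.sqrt` was defined
in the older Mathlib (removed since). -/
noncomputable def psdSqrt {A : Matrix n n ℂ} (hA : A.PosSemidef) : Matrix n n ℂ :=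
  hA.1.eigenvectorUnitary.1 * diagonal ((↑) ∘ (√·) ∘ hA.1.eigenvalues) *
  (star hA.1.eigenvectorUnitary : Matrix n n ℂ)

/-- Trace distance `D(ρ,σ) = (1/2) tr |ρ - σ|`, where `|A| = sqrt (Aᴴ A)`. -/
noncomputable def traceDist (ρ σ : Matrix n n ℂ) : ℝ :=
  (1 / 2 : ℝ) * ((psdSqrt (Matrix.posSemidef_conjTranspose_mul_self (ρ - σ))).trace).re

/-- A density matrix: positive semidefinite with trace one. -/
def IsDensity (ρ : Matrix n n ℂ) : Prop := ρ.PosSemidef ∧ ρ.trace = 1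

/-- The largest eigenvalue of a (Hermitian) matrix. -/
noncomputable def lamMax (M : Matrix n n ℂ) : ℝ :=
  if h : M.IsHermitian then ⨆ i, h.eigenvalues i else 0

/-- The smallest eigenvalue of a (Hermitian) matrix. -/
noncomputable def lamMin (M : Matrix n n ℂ) : ℝ :=
  if h : M.IsHermitian then ⨅ i, h.eigenvalues i else 0

/-- Application of a quantum channel given by Kraus matrices. -/
noncomputable def applyChan {ι : Type*} [Fintype ι] (E : ι → Matrix n n ℂ)
    (ρ : Matrix n n ℂ) : Matrix n n ℂ := ∑ j, E j * ρ * (E j)ᴴ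

/-- The dual of a quantum channel given by Kraus matrices. -/
noncomputable def dualChan {ι : Type*} [Fintype ι] (E : ι → Matrix n n ℂ)
    (M : Matrix n n ℂ) : Matrix n n ℂ := ∑ j, (E j)ᴴ * M * E j

/-- `(ε,δ)`-differential privacy within `η` of the quantum algorithm `(E, M)`. -/
def IsDP {ι : Type*} [Fintype ι] {O : Type*} [Fintype O]
    (E : ι → Matrix n n ℂ) (M : O → Matrix n n ℂ) (ε δ η : ℝ) : Prop :=
  ∀ ρ σ : Matrix n n ℂ, IsDensity ρ → IsDensity σ → traceDist ρ σ ≤ η →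
    ∀ S : Finset O,
      (∑ k ∈ S, (M k * applyChan E ρ).trace).re ≤
        Real.exp ε * (∑ k ∈ S, (M k * applyChan E σ).trace).re + δ

/-- Rank-one projection `|ψ⟩⟨ψ|`. -/
noncomputable def proj (ψ : n → ℂ) : Matrix n n ℂ := vecMulVec ψ (star ψ)

end QDP

open scoped MatrixOrder

namespace QDP

variable {n : Type*} [Fintype n] [DecidableEq n]

theorem psdSqrt_eq_sqrt {A : Matrix n n ℂ} (hA : A.PosSemidef) : psdSqrt hA = CFC.sqrt A := by
  rw [CFC.sqrt_eq_real_sqrt A hA.nonneg, cfcₙ_eq_cfc, hA.1.cfc_eq, IsHermitian.cfc,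
    Unitary.conjStarAlgAut_apply]
  rfl

theorem traceDist_eq_re_trace_abs (ρ σ : Matrix n n ℂ) :
    traceDist ρ σ = (CFC.abs (ρ - σ)).trace.re / 2 := by
  rw [traceDist, psdSqrt_eq_sqrt, CFC.abs, star_eq_conjTranspose]
  ring

theorem algebraMap_lamMin_le {M : Matrix n n ℂ} (hM : M.IsHermitian) :
    algebraMap ℝ (Matrix n n ℂ) (lamMin M) ≤ M := by
  refine algebraMap_le_of_le_spectrum (fun x hx => ?_) hM.isSelfAdjoint
  obtain ⟨i, rfl⟩ := hM.spectrum_real_eq_range_eigenvalues ▸ hx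
  rw [lamMin, dif_pos hM]
  exact ciInf_le (Finite.bddBelow_range _) i

theorem le_algebraMap_lamMax {M : Matrix n n ℂ} (hM : M.IsHermitian) :
    M ≤ algebraMap ℝ (Matrix n n ℂ) (lamMax M) := by
  refine le_algebraMap_of_spectrum_le (fun x hx => ?_) hM.isSelfAdjoint
  obtain ⟨i, rfl⟩ := hM.spectrum_real_eq_range_eigenvalues ▸ hx
  rw [lamMax, dif_pos hM]
  exact le_ciSup (Finite.bddAbove_range _) i

theorem re_trace_mul_nonneg {A B : Matrix n n ℂ} (hA : 0 ≤ A) (hB : 0 ≤ B) :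
    0 ≤ (A * B).trace.re := by
  obtain ⟨X, rfl⟩ := CStarAlgebra.nonneg_iff_eq_star_mul_self.mp hA
  rw [Matrix.mul_assoc, trace_mul_comm]
  exact (RCLike.nonneg_iff.mp (hB.posSemidef.mul_mul_conjTranspose_same X).trace_nonneg).1

theorem re_trace_mul_mono {M N ρ : Matrix n n ℂ} (hMN : M ≤ N) (hρ : 0 ≤ ρ) :
    (M * ρ).trace.re ≤ (N * ρ).trace.re := by
  have := re_trace_mul_nonneg (sub_nonneg.mpr hMN) hρ
  rwa [Matrix.sub_mul, trace_sub, Complex.sub_re, sub_nonneg] at this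

theorem re_trace_algebraMap_mul (c : ℝ) (ρ : Matrix n n ℂ) :
    (algebraMap ℝ (Matrix n n ℂ) c * ρ).trace.re = c * ρ.trace.re := by
  simp [Algebra.algebraMap_eq_smul_one]

theorem lamMin_mul_re_trace_le {M ρ : Matrix n n ℂ} (hM : M.IsHermitian) (hρ : 0 ≤ ρ) :
    lamMin M * ρ.trace.re ≤ (M * ρ).trace.re := by
  simpa only [re_trace_algebraMap_mul] using re_trace_mul_mono (algebraMap_lamMin_le hM) hρ

theorem re_trace_mul_le_lamMax_mul {M ρ : Matrix n n ℂ} (hM : M.IsHermitian) (hρ : 0 ≤ ρ) :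
    (M * ρ).trace.re ≤ lamMax M * ρ.trace.re := by
  simpa only [re_trace_algebraMap_mul] using re_trace_mul_mono (le_algebraMap_lamMax hM) hρ

theorem re_trace_mul_le_of_trace_eq_zero {M Δ : Matrix n n ℂ} (hM : M.IsHermitian)
    (hΔ : Δ.IsHermitian) (h0 : Δ.trace = 0) :
    (M * Δ).trace.re ≤ (CFC.abs Δ).trace.re / 2 * (lamMax M - lamMin M) := by
  have hsub := congrArg (fun A => A.trace.re) (CFC.posPart_sub_negPart Δ hΔ.isSelfAdjoint)
  have hadd := congrArg (fun A => A.trace.re) (CFC.posPart_add_negPart Δ hΔ.isSelfAdjoint)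
  simp only [trace_sub, trace_add, Complex.sub_re, Complex.add_re, h0, Complex.zero_re] at hsub hadd
  calc (M * Δ).trace.re = (M * Δ⁺).trace.re - (M * Δ⁻).trace.re := by
        conv_lhs => rw [← CFC.posPart_sub_negPart Δ hΔ.isSelfAdjoint]
        rw [Matrix.mul_sub, trace_sub, Complex.sub_re]
    _ ≤ lamMax M * (Δ⁺).trace.re - lamMin M * (Δ⁻).trace.re :=
        sub_le_sub (re_trace_mul_le_lamMax_mul hM (CFC.posPart_nonneg Δ))
          (lamMin_mul_re_trace_le hM (CFC.negPart_nonneg Δ))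
    _ = (CFC.abs Δ).trace.re / 2 * (lamMax M - lamMin M) := by
        rw [show (Δ⁺).trace.re = (CFC.abs Δ).trace.re / 2 by linarith,
          show (Δ⁻).trace.re = (CFC.abs Δ).trace.re / 2 by linarith]
        ring

end QDP

open QDP in
theorem trace_diff_le_bound_general {d : ℕ}
    (M : Matrix (Fin d) (Fin d) ℂ) (hM : M.PosSemidef)
    (ε η : ℝ) (hε : 0 ≤ ε)
    (ρ σ : Matrix (Fin d) (Fin d) ℂ) (hρ : IsDensity ρ) (hσ : IsDensity σ)
    (hdist : traceDist ρ σ ≤ η) :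
    (M * (ρ - ((Real.exp ε : ℝ) : ℂ) • σ)).trace.re ≤
      η * lamMax M - (Real.exp ε + η - 1) * lamMin M := by
  have hσ1 : σ.trace.re = 1 := by rw [hσ.2, Complex.one_re]
  have hmin := lamMin_mul_re_trace_le hM.isHermitian hσ.1.nonneg
  have hmax := re_trace_mul_le_lamMax_mul hM.isHermitian hσ.1.nonneg
  rw [hσ1, mul_one] at hmin hmax
  have hdiff : (M * (ρ - σ)).trace.re ≤ η * (lamMax M - lamMin M) := by
    refine (re_trace_mul_le_of_trace_eq_zero hM.isHermitian (hρ.1.isHermitian.sub hσ.1.isHermitian)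
      (by rw [trace_sub, hρ.2, hσ.2, sub_self])).trans ?_
    rw [← traceDist_eq_re_trace_abs]
    exact mul_le_mul_of_nonneg_right hdist (by linarith)
  have hsplit : (M * (ρ - ((Real.exp ε : ℝ) : ℂ) • σ)).trace.re =
      (M * (ρ - σ)).trace.re - (Real.exp ε - 1) * (M * σ).trace.re := by
    simp only [Matrix.mul_sub, Matrix.mul_smul, trace_sub, trace_smul, smul_eq_mul, Complex.sub_re,
      Complex.re_ofReal_mul]
    ring
  have hexp : 0 ≤ Real.exp ε - 1 := by linarith [Real.add_one_le_exp ε]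
  rw [hsplit]
  linarith [mul_le_mul_of_nonneg_left hmin hexp]

open QDP in
/-- For any density matrices `ρ, σ` at trace distance at most `η`,
`tr(M (ρ - e^ε σ)) ≤ η λ_max(M) - (e^ε + η - 1) λ_min(M)`. -/
theorem trace_diff_le_bound {d : ℕ} (hd : 1 ≤ d)
    (M : Matrix (Fin d) (Fin d) ℂ) (hM : M.PosSemidef)
    (ε η : ℝ) (hε : 0 ≤ ε) (hη : 0 ≤ η)
    (ρ σ : Matrix (Fin d) (Fin d) ℂ) (hρ : IsDensity ρ) (hσ : IsDensity σ)
    (hdist : traceDist ρ σ ≤ η) :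
    (M * (ρ - ((Real.exp ε : ℝ) : ℂ) • σ)).trace.re ≤
      η * lamMax M - (Real.exp ε + η - 1) * lamMin M :=
  trace_diff_le_bound_general M hM ε η hε ρ σ hρ hσ hdist
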